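/- arXiv:1202.2968 — 2 statements merged into one kernel-verified Lean document; each statement's English description precedes it below -/
import Mathlib

section
/- Let n, b, a, k be natural numbers with 2b ≤ n, a ≥ 1, k ≥ 2 and b − k ≥ a. Then the graph J(n, b, a) contains a cycle of length 2k, i.e. there exist a vertex v and a closed walk from v to v that is a cycle of length 2k. -/
open Finset SimpleGraph

private lemma exists_walk_chain {V : Type*} {G : SimpleGraph V} (f : ℕ → V) :
    ∀ (d s : ℕ), (∀ j, s ≤ j → j < s + d → G.Adj (f j) (f (j+1))) →
      ∃ w : G.Walk (f s) (f (s + d)),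
        w.support = (List.range' s (d+1)).map f ∧
        w.edges = (List.range' s d).map (fun j => s(f j, f (j+1))) ∧
        w.length = d := by
  intro d
  induction d with
  | zero =>
      intro s _
      exact ⟨SimpleGraph.Walk.nil, by simp [List.range'_succ], by simp, rfl⟩
  | succ d ih =>
      intro s h
      obtain ⟨w, hsup, hedg, hlen⟩ := ih (s+1) (fun j hj hj' => h j (by omega) (by omega))
      have e1 : s + 1 + d = s + (d + 1) := by omega
      have hadj : G.Adj (f s) (f (s+1)) := h s le_rfl (by omega)
      refine ⟨SimpleGraph.Walk.cons hadj (w.copy rfl (congrArg f e1)), ?_, ?_, ?_⟩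
      · rw [SimpleGraph.Walk.support_cons, SimpleGraph.Walk.support_copy, hsup]
        simp [List.range'_succ]
      · rw [SimpleGraph.Walk.edges_cons, SimpleGraph.Walk.edges_copy, hedg]
        simp [List.range'_succ]
      · simp [hlen]

private lemma exists_cycle_of_chain {V : Type*} {G : SimpleGraph V} (f : ℕ → V) (L : ℕ)
    (hL : 3 ≤ L)
    (hadj : ∀ j, j < L → G.Adj (f j) (f (j+1))) (hcl : G.Adj (f L) (f 0))
    (hinj : ∀ i ≤ L, ∀ j ≤ L, f i = f j → i = j) :
    ∃ w : G.Walk (f 0) (f 0), w.IsCycle ∧ w.length = L + 1 := by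
  obtain ⟨w, hsup, hedg, hlen⟩ := exists_walk_chain f (L-1) 1 (fun j hj hj' => hadj j (by omega))
  have e1 : 1 + (L-1) = L := by omega
  set w' := w.copy rfl (congrArg f e1) with hw'
  set p := w'.concat hcl with hp
  have hpsup : p.support = ((List.range' 1 L).map f).concat (f 0) := by
    rw [hp, SimpleGraph.Walk.support_concat, hw', SimpleGraph.Walk.support_copy, hsup,
      show L - 1 + 1 = L by omega, List.concat_eq_append]
  have hpedg : p.edges = ((List.range' 1 (L-1)).map
      (fun j => s(f j, f (j+1)))).concat s(f L, f 0) := by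
    rw [hp, SimpleGraph.Walk.edges_concat, hw', SimpleGraph.Walk.edges_copy, hedg]
  refine ⟨SimpleGraph.Walk.cons (hadj 0 (by omega)) p, ?_, ?_⟩
  · rw [SimpleGraph.Walk.cons_isCycle_iff]
    constructor
    · rw [SimpleGraph.Walk.isPath_def, hpsup]
      have heq : ((List.range' 1 L).map f).concat (f 0)
          = ((List.range' 1 L).concat 0).map f := by
        simp
      rw [heq]
      apply List.Nodup.map_on
      · intro x hx y hy hxy
        simp only [List.concat_eq_append, List.mem_append, List.mem_range'_1,
          List.mem_singleton] at hx hy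
        have hx' : x ≤ L := by omega
        have hy' : y ≤ L := by omega
        exact hinj x hx' y hy' hxy
      · simp only [List.concat_eq_append]
        apply List.Nodup.append
        · exact List.nodup_range'
        · simp
        · intro x hx hx'
          simp only [List.mem_range'_1] at hx
          simp only [List.mem_singleton] at hx'
          omega
    · rw [hpedg]
      intro hmem
      simp only [List.concat_eq_append, List.mem_append, List.mem_map, List.mem_range'_1,
        List.mem_singleton] at hmem
      rcases hmem with ⟨i, hi, heq⟩ | heq
      · rw [Sym2.eq_iff] at heq
        rcases heq with ⟨h1, h2⟩ | ⟨h1, h2⟩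
        · have := hinj i (by omega) 0 (by omega) h1; omega
        · have := hinj (i+1) (by omega) 0 (by omega) h2; omega
      · rw [Sym2.eq_iff] at heq
        rcases heq with ⟨h1, h2⟩ | ⟨h1, h2⟩
        · have := hinj 0 (by omega) L (by omega) h1; omega
        · have := hinj 1 (by omega) L (by omega) (by simpa using h2); omega
  · rw [SimpleGraph.Walk.length_cons, hp, SimpleGraph.Walk.length_concat, hw',
      SimpleGraph.Walk.length_copy, hlen]
    omega

/-! ### The concrete vertex sets, as finsets of naturals -/

private def Vev (c r i : ℕ) : Finset ℕ :=
  insert (c + r + i) ((Finset.range (c + r)).erase (c + i))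

private def Vod (c r k i : ℕ) : Finset ℕ :=
  insert (c + (i+1) % k)
    ((Finset.range c ∪ Finset.Ico (c + r) (c + 2*r)).erase (c + r + i))

private lemma mem_Vev {c r i x : ℕ} :
    x ∈ Vev c r i ↔ x = c + r + i ∨ (x < c + r ∧ x ≠ c + i) := by
  simp [Vev, Finset.mem_insert, Finset.mem_erase, Finset.mem_range, and_comm]

private lemma mem_Vod {c r k i x : ℕ} :
    x ∈ Vod c r k i ↔ x = c + (i+1) % k ∨
      ((x < c ∨ (c + r ≤ x ∧ x < c + 2*r)) ∧ x ≠ c + r + i) := by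
  simp [Vod, Finset.mem_insert, Finset.mem_erase, Finset.mem_range, Finset.mem_union,
    Finset.mem_Ico, and_comm]

private lemma nxt_spec {k i : ℕ} (hk : 2 ≤ k) (hi : i < k) :
    (i+1) % k < k ∧ (i+1) % k ≠ i ∧ (i + 1 < k → (i+1) % k = i+1) ∧
      (i + 1 = k → (i+1) % k = 0) := by
  rcases Nat.lt_or_ge (i+1) k with h | h
  · rw [Nat.mod_eq_of_lt h]; omega
  · have h2 : i + 1 = k := by omega
    rw [h2, Nat.mod_self]; omega

private lemma card_Vev {c r i : ℕ} (hi : i < r) : (Vev c r i).card = c + r := by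
  rw [Vev, Finset.card_insert_of_notMem, Finset.card_erase_of_mem, Finset.card_range]
  · omega
  · simp only [Finset.mem_range]; omega
  · simp only [Finset.mem_erase, Finset.mem_range]; omega

private lemma card_D {c r : ℕ} :
    (Finset.range c ∪ Finset.Ico (c + r) (c + 2*r)).card = c + r := by
  rw [Finset.card_union_of_disjoint, Finset.card_range, Nat.card_Ico]
  · omega
  · rw [Finset.disjoint_left]
    intro x hx hx'
    simp only [Finset.mem_range] at hx
    simp only [Finset.mem_Ico] at hx'
    omega

private lemma card_Vod {c r k i : ℕ} (hk : 2 ≤ k) (hkr : k < r) (hi : i < k) :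
    (Vod c r k i).card = c + r := by
  obtain ⟨hd1, hd2, -, -⟩ := nxt_spec hk hi
  rw [Vod, Finset.card_insert_of_notMem, Finset.card_erase_of_mem, card_D]
  · omega
  · simp only [Finset.mem_union, Finset.mem_range, Finset.mem_Ico]; omega
  · simp only [Finset.mem_erase, Finset.mem_union, Finset.mem_range, Finset.mem_Ico]
    omega

private lemma inter_ev_od {c r k i : ℕ} (hk : 2 ≤ k) (hkr : k < r) (hi : i < k) :
    Vev c r i ∩ Vod c r k i = insert (c + (i+1) % k) (Finset.range c) := by
  obtain ⟨hd1, hd2, -, -⟩ := nxt_spec hk hi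
  ext x
  simp only [Finset.mem_inter, mem_Vev, mem_Vod, Finset.mem_insert, Finset.mem_range]
  omega

private lemma inter_od_ev {c r k i : ℕ} (hk : 2 ≤ k) (hkr : k < r) (hi : i < k) :
    Vod c r k i ∩ Vev c r ((i+1) % k) = insert (c + r + (i+1) % k) (Finset.range c) := by
  obtain ⟨hd1, hd2, -, -⟩ := nxt_spec hk hi
  ext x
  simp only [Finset.mem_inter, mem_Vev, mem_Vod, Finset.mem_insert, Finset.mem_range]
  omega

private lemma card_insert_range {c y : ℕ} (h : c ≤ y) :
    (insert y (Finset.range c)).card = c + 1 := by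
  rw [Finset.card_insert_of_notMem (by simp; omega), Finset.card_range]

private lemma Vev_inj {c r i i' : ℕ} (hi : i < r) (hi' : i' < r)
    (h : Vev c r i = Vev c r i') : i = i' := by
  have := Finset.ext_iff.mp h (c + r + i)
  rw [mem_Vev, mem_Vev] at this
  omega

private lemma Vod_inj {c r k i i' : ℕ} (hk : 2 ≤ k) (hkr : k < r) (hi : i < k) (hi' : i' < k)
    (h : Vod c r k i = Vod c r k i') : i = i' := by
  obtain ⟨hd1, -, -, -⟩ := nxt_spec hk hi
  obtain ⟨hd1', -, -, -⟩ := nxt_spec hk hi'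
  have := Finset.ext_iff.mp h (c + r + i')
  rw [mem_Vod, mem_Vod] at this
  omega

private lemma Vev_ne_Vod {c r k i i' : ℕ} (hk : 2 ≤ k) (hkr : k < r) (hi : i < r)
    (hi' : i' < k) : Vev c r i ≠ Vod c r k i' := by
  obtain ⟨hd1', -, -, -⟩ := nxt_spec hk hi'
  intro h
  obtain ⟨t, ht1, ht2, ht3⟩ : ∃ t, t < r ∧ t ≠ i ∧ t ≠ (i'+1) % k := by
    refine ⟨if 0 = i ∨ 0 = (i'+1) % k then (if 1 = i ∨ 1 = (i'+1) % k then 2 else 1) else 0, ?_⟩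
    split_ifs <;> omega
  have := Finset.ext_iff.mp h (c + t)
  rw [mem_Vev, mem_Vod] at this
  omega

/-! ### Transfer to `Fin n` -/

private lemma attachFin_inter {n : ℕ} {s t : Finset ℕ} (hs : ∀ x ∈ s, x < n)
    (ht : ∀ x ∈ t, x < n) :
    s.attachFin hs ∩ t.attachFin ht
      = (s ∩ t).attachFin (fun x hx => hs x (Finset.mem_inter.mp hx).1) := by
  ext y
  simp [Finset.mem_attachFin, Finset.mem_inter]

private lemma attachFin_injective {n : ℕ} {s t : Finset ℕ} (hs : ∀ x ∈ s, x < n)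
    (ht : ∀ x ∈ t, x < n) (h : s.attachFin hs = t.attachFin ht) : s = t := by
  ext x
  constructor
  · intro hx
    have h2 : (⟨x, hs x hx⟩ : Fin n) ∈ s.attachFin hs := by rwa [Finset.mem_attachFin]
    rw [h, Finset.mem_attachFin] at h2
    exact h2
  · intro hx
    have h2 : (⟨x, ht x hx⟩ : Fin n) ∈ t.attachFin ht := by rwa [Finset.mem_attachFin]
    rw [← h, Finset.mem_attachFin] at h2
    exact h2

/-- The graph `J(n, b, t)`: vertices are the `b`-element subsets of `Fin n`,
two distinct subsets being adjacent iff their intersection has exactly `t` elements. -/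
def J (n b t : ℕ) : SimpleGraph {A : Finset (Fin n) // A.card = b} :=
  SimpleGraph.fromRel (fun A B => ((A : Finset (Fin n)) ∩ (B : Finset (Fin n))).card = t)

/-- **Theorem 8.** If `2b ≤ n`, `a ≥ 1`, `k ≥ 2` and `b − k ≥ a`, then the graph
`J(n, b, a)` contains a cycle of length `2k`. -/
theorem J_has_even_cycle (n b a k : ℕ) (hbn : 2 * b ≤ n) (ha : 1 ≤ a) (hk : 2 ≤ k)
    (hbk : a ≤ b - k) :
    ∃ (v : {A : Finset (Fin n) // A.card = b}) (w : (J n b a).Walk v v),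
      w.IsCycle ∧ w.length = 2 * k := by
  obtain ⟨c, rfl⟩ : ∃ c, a = c + 1 := ⟨a - 1, by omega⟩
  obtain ⟨r, hbr, hkr⟩ : ∃ r, b = c + r ∧ k < r := ⟨b - c, by omega, by omega⟩
  subst hbr
  have hn : c + 2 * r ≤ n := by omega
  set V : ℕ → Finset ℕ := fun j =>
    if (j % (2*k)) % 2 = 0 then Vev c r ((j % (2*k)) / 2)
    else Vod c r k ((j % (2*k)) / 2) with hV
  have hjm : ∀ j : ℕ, j % (2*k) < 2*k := fun j => Nat.mod_lt _ (by omega)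
  have hVbound : ∀ j, ∀ x ∈ V j, x < n := by
    intro j x hx
    have h1 := hjm j
    simp only [hV] at hx
    split_ifs at hx
    · rw [mem_Vev] at hx; omega
    · rw [mem_Vod] at hx
      have : (j % (2*k) / 2 + 1) % k < k := Nat.mod_lt _ (by omega)
      omega
  have hVcard : ∀ j, (V j).card = c + r := by
    intro j
    have h1 := hjm j
    simp only [hV]
    split_ifs with hpar
    · exact card_Vev (by omega)
    · exact card_Vod hk hkr (by omega)
  set F : ℕ → {A : Finset (Fin n) // A.card = c + r} := fun j =>
    ⟨(V j).attachFin (hVbound j), by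
      rw [Finset.card_attachFin]; exact hVcard j⟩ with hF
  have hFval : ∀ j, j < 2 * k → (F j : Finset (Fin n)) = (V j).attachFin (hVbound j) := by
    intro j hj
    simp only [hF]
  have hadj_of : ∀ j j', j < 2 * k → j' < 2 * k → V j ≠ V j' →
      ((V j) ∩ (V j')).card = c + 1 → (J n (c + r) (c + 1)).Adj (F j) (F j') := by
    intro j j' hj hj' hne hcard
    rw [J, SimpleGraph.fromRel_adj]
    constructor
    · intro hFeq
      apply hne
      apply attachFin_injective (hVbound j) (hVbound j')
      rw [← hFval j hj, ← hFval j' hj', hFeq]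
    · left
      rw [hFval j hj, hFval j' hj', attachFin_inter, Finset.card_attachFin]
      exact hcard
  have hparity : ∀ j : ℕ, j % 2 = 0 ∨ j % 2 = 1 := fun j => by omega
  have hVev_eq : ∀ j, j < 2*k → j % 2 = 0 → V j = Vev c r (j / 2) := by
    intro j hjk hj
    simp only [hV]
    rw [Nat.mod_eq_of_lt hjk, if_pos hj]
  have hVod_eq : ∀ j, j < 2*k → j % 2 = 1 → V j = Vod c r k (j / 2) := by
    intro j hjk hj
    simp only [hV]
    rw [Nat.mod_eq_of_lt hjk, if_neg (by omega)]
  have hadj : ∀ j, j < 2 * k - 1 → (J n (c + r) (c + 1)).Adj (F j) (F (j+1)) := by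
    intro j hj
    rcases hparity j with hpar | hpar
    · have h2 : (j+1) % 2 = 1 := by omega
      have h3 : (j+1) / 2 = j / 2 := by omega
      have hi : j / 2 < k := by omega
      apply hadj_of j (j+1) (by omega) (by omega)
      · rw [hVev_eq j (by omega) hpar, hVod_eq (j+1) (by omega) h2, h3]
        exact Vev_ne_Vod hk hkr (by omega) hi
      · rw [hVev_eq j (by omega) hpar, hVod_eq (j+1) (by omega) h2, h3, inter_ev_od hk hkr hi]
        obtain ⟨hd1, -, -, -⟩ := nxt_spec hk hi
        exact card_insert_range (by omega)
    · have h2 : (j+1) % 2 = 0 := by omega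
      have h3 : (j+1) / 2 = j / 2 + 1 := by omega
      have hi : j / 2 < k := by omega
      have hlt : j / 2 + 1 < k := by omega
      obtain ⟨hd1, hd2, hd3, -⟩ := nxt_spec hk hi
      have hmod := hd3 hlt
      apply hadj_of j (j+1) (by omega) (by omega)
      · rw [hVod_eq j (by omega) hpar, hVev_eq (j+1) (by omega) h2, h3]
        intro hcontra
        exact Vev_ne_Vod hk hkr (by omega) hi hcontra.symm
      · rw [hVod_eq j (by omega) hpar, hVev_eq (j+1) (by omega) h2, h3, Finset.inter_comm, ← hmod,
          Finset.inter_comm, inter_od_ev hk hkr hi, hmod]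
        exact card_insert_range (by omega)
  have hcl : (J n (c + r) (c + 1)).Adj (F (2*k - 1)) (F 0) := by
    have hpar : (2*k - 1) % 2 = 1 := by omega
    have h3 : (2*k - 1) / 2 = k - 1 := by omega
    have hi : k - 1 < k := by omega
    obtain ⟨hd1, hd2, -, hd4⟩ := nxt_spec hk hi
    have hmod : (k - 1 + 1) % k = 0 := hd4 (by omega)
    have h0 : V 0 = Vev c r 0 := by
      rw [hVev_eq 0 (by omega) (by omega)]
    apply hadj_of (2*k-1) 0 (by omega) (by omega)
    · rw [hVod_eq (2*k-1) (by omega) hpar, h3, h0]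
      intro hcontra
      exact Vev_ne_Vod hk hkr (by omega) hi hcontra.symm
    · rw [hVod_eq (2*k-1) (by omega) hpar, h3, h0]
      have heq : Vev c r 0 = Vev c r ((k - 1 + 1) % k) := by rw [hmod]
      rw [heq, inter_od_ev hk hkr hi, hmod]
      exact card_insert_range (by omega)
  have hVinj : ∀ j ≤ 2*k - 1, ∀ j' ≤ 2*k - 1, V j = V j' → j = j' := by
    intro j hj j' hj' h
    rcases hparity j with hp | hp <;> rcases hparity j' with hp' | hp'
    · rw [hVev_eq j (by omega) hp, hVev_eq j' (by omega) hp'] at h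
      have := Vev_inj (c := c) (r := r) (by omega : j/2 < r) (by omega : j'/2 < r) h
      omega
    · rw [hVev_eq j (by omega) hp, hVod_eq j' (by omega) hp'] at h
      exact absurd h (Vev_ne_Vod hk hkr (by omega) (by omega))
    · rw [hVod_eq j (by omega) hp, hVev_eq j' (by omega) hp'] at h
      exact absurd h.symm (Vev_ne_Vod hk hkr (by omega) (by omega))
    · rw [hVod_eq j (by omega) hp, hVod_eq j' (by omega) hp'] at h
      have := Vod_inj hk hkr (by omega : j/2 < k) (by omega : j'/2 < k) h
      omega
  have hFinj : ∀ j ≤ 2*k - 1, ∀ j' ≤ 2*k - 1, F j = F j' → j = j' := by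
    intro j hj j' hj' h
    apply hVinj j hj j' hj'
    apply attachFin_injective (hVbound j) (hVbound j')
    rw [← hFval j (by omega), ← hFval j' (by omega)]
    exact congrArg Subtype.val h
  obtain ⟨w, hw1, hw2⟩ := exists_cycle_of_chain F (2*k - 1) (by omega) hadj hcl hFinj
  refine ⟨F 0, w, hw1, by omega⟩
end

section
/- Let n, b, p, k be natural numbers with k ≥ 1, 2b ≤ n, p ≤ b and k·n < p·(2k + 1). Then the graph J(n, b, b − p) contains no cycle of length 2k + 1. -/
/-- If `k ≥ 1`, `2b ≤ n`, `p ≤ b` and `k·n < p·(2k + 1)`, then the graph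
`J(n, b, b − p)` contains no cycle of length `2k + 1`. -/
theorem J_no_short_odd_cycle (n b p k : ℕ) (hk : 1 ≤ k) (hbn : 2 * b ≤ n) (hpb : p ≤ b)
    (hkn : k * n < p * (2 * k + 1)) :
    ∀ (v : {A : Finset (Fin n) // A.card = b}) (w : (J n b (b - p)).Walk v v),
      w.IsCycle → w.length ≠ 2 * k + 1 := by
  intro v w _ hlen
  classical
  set m := w.length with hm
  -- membership change indicator
  let Q : Fin n → ℕ → Prop := fun x i =>
    ¬ ((x ∈ (w.getVert i : Finset (Fin n))) ↔ (x ∈ (w.getVert (i+1) : Finset (Fin n))))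
  let f : Fin n → ℕ := fun x => ((Finset.range m).filter (Q x)).card
  -- per-step change count is 2p
  have step : ∀ i, i < m →
      (Finset.univ.filter (fun x : Fin n => Q x i)).card = 2 * p := by
    intro i hi
    have hadj := w.adj_getVert_succ hi
    set A := (w.getVert i : Finset (Fin n)) with hA
    set B := (w.getVert (i+1) : Finset (Fin n)) with hB
    have hAc : A.card = b := (w.getVert i).2
    have hBc : B.card = b := (w.getVert (i+1)).2
    unfold J at hadj; rw [SimpleGraph.fromRel_adj] at hadj
    have hcap : (A ∩ B).card = b - p := by
      rcases hadj.2 with h | h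
      · exact h
      · rwa [Finset.inter_comm] at h
    have hset : Finset.univ.filter (fun x : Fin n => Q x i) = (A \ B) ∪ (B \ A) := by
      ext x
      simp only [Finset.mem_filter, Finset.mem_univ, true_and, Finset.mem_union,
        Finset.mem_sdiff, Q, ← hA, ← hB]
      tauto
    have h1 := Finset.card_sdiff_add_card_inter A B
    have h2 := Finset.card_sdiff_add_card_inter B A
    rw [Finset.inter_comm] at h2
    rw [hset, Finset.card_union_of_disjoint (disjoint_sdiff_sdiff)]
    omega
  -- each f x is even
  have even_f : ∀ x, Even (f x) := by
    intro x
    have : ((f x : ℕ) : ZMod 2) = 0 := by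
      have : (f x : ZMod 2) =
          ∑ i ∈ Finset.range m,
            ((if x ∈ (w.getVert (i+1) : Finset (Fin n)) then (1 : ZMod 2) else 0)
              - (if x ∈ (w.getVert i : Finset (Fin n)) then (1 : ZMod 2) else 0)) := by
        rw [show f x = ((Finset.range m).filter (Q x)).card from rfl, Finset.card_filter]
        push_cast
        refine Finset.sum_congr rfl fun i _ => ?_
        by_cases h1 : x ∈ (w.getVert i : Finset (Fin n)) <;>
          by_cases h2 : x ∈ (w.getVert (i+1) : Finset (Fin n)) <;>
          simp [Q, h1, h2] <;> decide
      rw [this, Finset.sum_range_sub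
        (fun i => (if x ∈ (w.getVert i : Finset (Fin n)) then (1 : ZMod 2) else 0))]
      rw [hm, SimpleGraph.Walk.getVert_length, SimpleGraph.Walk.getVert_zero, sub_self]
    rw [ZMod.natCast_eq_zero_iff] at this
    exact even_iff_two_dvd.2 this
  -- each f x ≤ 2k
  have f_le : ∀ x, f x ≤ 2 * k := by
    intro x
    have h1 : f x ≤ m := by
      simpa using Finset.card_filter_le (Finset.range m) (Q x)
    obtain ⟨c, hc⟩ := even_f x
    omega
  -- total count two ways
  have total : ∑ x : Fin n, f x = m * (2 * p) := by
    have : ∑ x : Fin n, f x = ∑ i ∈ Finset.range m,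
        (Finset.univ.filter (fun x : Fin n => Q x i)).card := by
      simp_rw [f, Finset.card_filter]
      rw [Finset.sum_comm]
    rw [this, Finset.sum_congr rfl (fun i hi => step i (Finset.mem_range.1 hi)),
      Finset.sum_const, Finset.card_range, smul_eq_mul]
  have hub : ∑ x : Fin n, f x ≤ n * (2 * k) := by
    calc ∑ x : Fin n, f x ≤ ∑ _x : Fin n, 2 * k := Finset.sum_le_sum fun x _ => f_le x
    _ = n * (2 * k) := by simp [Finset.sum_const, Finset.card_univ, mul_comm]
  rw [total, hlen] at hub
  nlinarith [hub, hkn]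
end
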